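/- arXiv:1604.03871 — 7 statements merged into one kernel-verified Lean document; each statement's English description precedes it below -/
import Mathlib

section
/- Let f ≥ 1 and n be natural numbers with 2f + 2 ≤ n ≤ 4f, and set c = n − 2f. Then there is no function D from finite multisets of real numbers to real numbers satisfying both of the following: (Validity) for every multiset C of c reals taken from [0,1] and every multiset B of f reals taken from [0,1], D(C + B) lies in the closed interval [min C, max C]; and (Agreement) for every multiset C of c reals taken from [0,1] with max C − min C > 0 and all multisets B, B′ of f reals taken from [0,1], |D(C + B) − D(C + B′)| < max C − min C. (This is the one-round core of the paper's Theorem: no algorithm solves Simple Approximate Agreement in Garay's mobile Byzantine model (M1) when n ≤ 4f.) -/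
open Multiset

/-- The minimum element of a (nonempty, finite) multiset of reals. -/
noncomputable def mmin (V : Multiset ℝ) : ℝ := sInf {x : ℝ | x ∈ V}

/-- The maximum element of a (nonempty, finite) multiset of reals. -/
noncomputable def mmax (V : Multiset ℝ) : ℝ := sSup {x : ℝ | x ∈ V}

/-- The multiset obtained from `N` by deleting its `t` smallest and `t` largest
elements (counted with multiplicity). -/
noncomputable def trim (t : ℕ) (N : Multiset ℝ) : Multiset ℝ :=
  (((N.sort (· ≤ ·)).drop t).take (Multiset.card N - 2 * t) : List ℝ)

/-- The arithmetic mean of a (nonempty) finite multiset of reals. -/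
noncomputable def mean (R : Multiset ℝ) : ℝ := R.sum / (Multiset.card R : ℝ)

/-- Lower bound for Garay's model (M1): no one-round decision function exists
when `2f + 2 ≤ n ≤ 4f`, with `c = n - 2f` correct values and `f` Byzantine
values per round. -/
theorem no_simple_approx_agreement_M1 (f n : ℕ) (hf : 1 ≤ f)
    (hn₁ : 2 * f + 2 ≤ n) (hn₂ : n ≤ 4 * f) :
    ¬ ∃ D : Multiset ℝ → ℝ,
      (∀ C B : Multiset ℝ,
        Multiset.card C = n - 2 * f → (∀ x ∈ C, x ∈ Set.Icc (0 : ℝ) 1) →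
        Multiset.card B = f → (∀ x ∈ B, x ∈ Set.Icc (0 : ℝ) 1) →
        D (C + B) ∈ Set.Icc (mmin C) (mmax C)) ∧
      (∀ C B B' : Multiset ℝ,
        Multiset.card C = n - 2 * f → (∀ x ∈ C, x ∈ Set.Icc (0 : ℝ) 1) →
        mmax C - mmin C > 0 →
        Multiset.card B = f → (∀ x ∈ B, x ∈ Set.Icc (0 : ℝ) 1) →
        Multiset.card B' = f → (∀ x ∈ B', x ∈ Set.Icc (0 : ℝ) 1) →
        |D (C + B) - D (C + B')| < mmax C - mmin C) := by

  rintro ⟨D, hV, hA⟩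
  set c := n - 2 * f with hc
  have hc2 : 2 ≤ c := by omega
  have hcf : c ≤ 2 * f := by omega
  set a := max (c - f) 1 with ha
  have h1 : 1 ≤ a := le_max_right _ _
  have h3 : a ≤ f := by omega
  set b := c - a with hb
  have h2 : 1 ≤ b := by omega
  have h4 : b ≤ f := by omega
  have hab : a + b = c := by omega
  -- key multisets
  set C : Multiset ℝ := Multiset.replicate a 0 + Multiset.replicate b 1 with hC
  have hsetC : {x : ℝ | x ∈ C} = {0, 1} := by
    ext x
    simp only [hC, Multiset.mem_add, Multiset.mem_replicate, Set.mem_setOf_eq,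
      Set.mem_insert_iff, Set.mem_singleton_iff]
    constructor
    · rintro (⟨-, h⟩ | ⟨-, h⟩) <;> simp [h]
    · rintro (h | h)
      · exact Or.inl ⟨by omega, h⟩
      · exact Or.inr ⟨by omega, h⟩
  have hminC : mmin C = 0 := by
    rw [mmin, hsetC, csInf_pair]; simp
  have hmaxC : mmax C = 1 := by
    rw [mmax, hsetC, csSup_pair]; simp
  have hrepset : ∀ (k : ℕ), k ≠ 0 → ∀ r : ℝ,
      {x : ℝ | x ∈ Multiset.replicate k r} = {r} := by
    intro k hk r; ext x; simp [Multiset.mem_replicate, hk]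
  have hminrep : ∀ (k : ℕ), k ≠ 0 → ∀ r : ℝ, mmin (Multiset.replicate k r) = r := by
    intro k hk r; rw [mmin, hrepset k hk r, csInf_singleton]
  have hmaxrep : ∀ (k : ℕ), k ≠ 0 → ∀ r : ℝ, mmax (Multiset.replicate k r) = r := by
    intro k hk r; rw [mmax, hrepset k hk r, csSup_singleton]
  have hbnd : ∀ (M : Multiset ℝ), (∀ x ∈ M, x = 0 ∨ x = 1) →
      ∀ x ∈ M, x ∈ Set.Icc (0 : ℝ) 1 := by
    intro M hM x hx
    rcases hM x hx with h | h <;> simp [h]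
  have hCbnd : ∀ x ∈ C, x ∈ Set.Icc (0 : ℝ) 1 := by
    apply hbnd; intro x hx
    simp only [hC, Multiset.mem_add, Multiset.mem_replicate] at hx
    tauto
  have hrepbnd : ∀ (k : ℕ) (r : ℝ), r = 0 ∨ r = 1 →
      ∀ x ∈ Multiset.replicate k r, x ∈ Set.Icc (0 : ℝ) 1 := by
    intro k r hr; apply hbnd; intro x hx
    rw [Multiset.eq_of_mem_replicate hx]; exact hr
  have hCcard : Multiset.card C = n - 2 * f := by
    simp [hC]; omega
  -- Scenario equalities
  have hafc : c + (a + f - c) = a + f := by omega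
  have hbfc : c + (b + f - c) = b + f := by omega
  have e1 : C + Multiset.replicate f (0:ℝ) =
      Multiset.replicate c (0:ℝ) +
        (Multiset.replicate (a + f - c) (0:ℝ) + Multiset.replicate b 1) := by
    rw [hC, add_right_comm, ← Multiset.replicate_add, ← add_assoc,
      ← Multiset.replicate_add, hafc, Nat.add_comm a f]
  have e2 : C + Multiset.replicate f (1:ℝ) =
      Multiset.replicate c (1:ℝ) +
        (Multiset.replicate a (0:ℝ) + Multiset.replicate (b + f - c) (1:ℝ)) := by
    rw [hC, add_assoc, ← Multiset.replicate_add, ← add_assoc,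
      add_comm (Multiset.replicate c (1:ℝ)) _, add_assoc,
      ← Multiset.replicate_add, hbfc, Nat.add_comm b f]
  -- forced decisions
  have hd1 : D (C + Multiset.replicate f (0:ℝ)) = 0 := by
    have hv := hV (Multiset.replicate c (0:ℝ))
      (Multiset.replicate (a + f - c) (0:ℝ) + Multiset.replicate b 1)
      (by simp <;> omega)
      (hrepbnd c 0 (Or.inl rfl))
      (by simp <;> omega)
      (by
        apply hbnd; intro x hx
        simp only [Multiset.mem_add, Multiset.mem_replicate] at hx
        tauto)
    rw [← e1, hminrep c (by omega) 0, hmaxrep c (by omega) 0] at hv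
    have := hv.1; have := hv.2; linarith
  have hd2 : D (C + Multiset.replicate f (1:ℝ)) = 1 := by
    have hv := hV (Multiset.replicate c (1:ℝ))
      (Multiset.replicate a (0:ℝ) + Multiset.replicate (b + f - c) (1:ℝ))
      (by simp <;> omega)
      (hrepbnd c 1 (Or.inr rfl))
      (by simp <;> omega)
      (by
        apply hbnd; intro x hx
        simp only [Multiset.mem_add, Multiset.mem_replicate] at hx
        tauto)
    rw [← e2, hminrep c (by omega) 1, hmaxrep c (by omega) 1] at hv
    have := hv.1; have := hv.2; linarith
  -- agreement contradiction
  have hag := hA C (Multiset.replicate f (0:ℝ)) (Multiset.replicate f (1:ℝ))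
    hCcard hCbnd (by rw [hminC, hmaxC]; norm_num)
    (by simp) (hrepbnd f 0 (Or.inl rfl))
    (by simp) (hrepbnd f 1 (Or.inr rfl))
  rw [hd1, hd2, hminC, hmaxC] at hag
  norm_num at hag
end

section
/- Let f ≥ 1 and n be natural numbers with 3f < n ≤ 5f, and set c = n − 2f. Then there is no function D from finite multisets of real numbers to real numbers satisfying both of the following: (Validity) for every multiset C of c reals taken from [0,1], every real s in [0,1], and every multiset B of f reals taken from [0,1], D(C + f·{s} + B) lies in the closed interval [min C, max C]; and (Agreement) for every multiset C of c reals taken from [0,1] with max C − min C > 0, every real s in [0,1], and all multisets B, B′ of f reals taken from [0,1], |D(C + f·{s} + B) − D(C + f·{s} + B′)| < max C − min C. (This is the one-round core of the paper's Theorem: no algorithm solves Simple Approximate Agreement in Bonnet et al.'s mobile Byzantine model (M2) when n ≤ 5f.) -/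
open Multiset

set_option linter.unreachableTactic false
set_option linter.unusedTactic false

lemma mmin_replicate (k : ℕ) (hk : k ≠ 0) (a : ℝ) : mmin (replicate k a) = a := by
  unfold mmin
  have h : {x : ℝ | x ∈ Multiset.replicate k a} = {a} := by
    ext x; simp [Multiset.mem_replicate, hk]
  rw [h, csInf_singleton]

lemma mmax_replicate (k : ℕ) (hk : k ≠ 0) (a : ℝ) : mmax (replicate k a) = a := by
  unfold mmax
  have h : {x : ℝ | x ∈ Multiset.replicate k a} = {a} := by
    ext x; simp [Multiset.mem_replicate, hk]
  rw [h, csSup_singleton]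

lemma mix_set (j k : ℕ) (hj : j ≠ 0) (hk : k ≠ 0) :
    {x : ℝ | x ∈ replicate j (0:ℝ) + replicate k (1:ℝ)} = {0, 1} := by
  ext x; simp [Multiset.mem_replicate, hj, hk]


/-- Lower bound for Bonnet et al.'s model (M2): no one-round decision function
exists when `3f < n ≤ 5f`, with `c = n - 2f` correct values, `f` copies of a
common cured value `s`, and `f` Byzantine values per round. -/
theorem no_simple_approx_agreement_M2 (f n : ℕ) (hf : 1 ≤ f)
    (hn₁ : 3 * f < n) (hn₂ : n ≤ 5 * f) :
    ¬ ∃ D : Multiset ℝ → ℝ,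
      (∀ (C : Multiset ℝ) (s : ℝ) (B : Multiset ℝ),
        Multiset.card C = n - 2 * f → (∀ x ∈ C, x ∈ Set.Icc (0 : ℝ) 1) →
        s ∈ Set.Icc (0 : ℝ) 1 →
        Multiset.card B = f → (∀ x ∈ B, x ∈ Set.Icc (0 : ℝ) 1) →
        D (C + Multiset.replicate f s + B) ∈ Set.Icc (mmin C) (mmax C)) ∧
      (∀ (C : Multiset ℝ) (s : ℝ) (B B' : Multiset ℝ),
        Multiset.card C = n - 2 * f → (∀ x ∈ C, x ∈ Set.Icc (0 : ℝ) 1) →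
        mmax C - mmin C > 0 →
        s ∈ Set.Icc (0 : ℝ) 1 →
        Multiset.card B = f → (∀ x ∈ B, x ∈ Set.Icc (0 : ℝ) 1) →
        Multiset.card B' = f → (∀ x ∈ B', x ∈ Set.Icc (0 : ℝ) 1) →
        |D (C + Multiset.replicate f s + B) - D (C + Multiset.replicate f s + B')|
          < mmax C - mmin C) := by
  rintro ⟨D, hval, hagr⟩
  set c := n - 2 * f with hcdef
  have hfc : f + 1 ≤ c := by omega
  have hc3 : c ≤ 3 * f := by omega
  have hfne : f ≠ 0 := by omega
  have hcfne : c - f ≠ 0 := by omega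
  -- multisets
  set C1 : Multiset ℝ := replicate c 0 with hC1
  set C2 : Multiset ℝ := replicate (c - f) 0 + replicate f 1 with hC2
  set C3 : Multiset ℝ := replicate c 1 with hC3
  set M1 : Multiset ℝ := replicate c (0:ℝ) + replicate (2*f) (1:ℝ) with hM1
  set M2 : Multiset ℝ := replicate (c - f) (0:ℝ) + replicate (3*f) (1:ℝ) with hM2
  have hmem01 : ∀ (j k : ℕ) (x : ℝ), x ∈ replicate j (0:ℝ) + replicate k (1:ℝ) →
      x ∈ Set.Icc (0:ℝ) 1 := by
    intro j k x hx
    rcases Multiset.mem_add.1 hx with h | h <;>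
      [skip; skip] <;> simp [Multiset.eq_of_mem_replicate h] <;> norm_num
  have h01 : (0:ℝ) ∈ Set.Icc (0:ℝ) 1 := by norm_num
  have h11 : (1:ℝ) ∈ Set.Icc (0:ℝ) 1 := by norm_num
  -- D M1 = 0 via validity with C = C1, s = 1, B = replicate f 1
  have hDM1 : D M1 = 0 := by
    have heq : C1 + replicate f (1:ℝ) + replicate f (1:ℝ) = M1 := by
      ext x
      simp only [hC1, hM1, Multiset.count_add, Multiset.count_replicate]
      split_ifs <;> first | omega | (subst_vars; norm_num at *)
    have := hval C1 1 (replicate f 1) (by simp [hC1]) ?_ h11 (by simp) ?_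
    · rw [heq, mmin_replicate c (by omega) 0, mmax_replicate c (by omega) 0] at this
      exact le_antisymm this.2 this.1
    · intro x hx; simp [hC1, Multiset.eq_of_mem_replicate hx] <;> norm_num
    · intro x hx; simp [Multiset.eq_of_mem_replicate hx]
  -- D M2 = 1 via validity with C = C3
  have hDM2 : D M2 = 1 := by
    have hC3mem : ∀ x ∈ C3, x ∈ Set.Icc (0:ℝ) 1 := by
      intro x hx; simp [hC3, Multiset.eq_of_mem_replicate hx]
    rcases le_or_gt (2*f) c with h | h
    · -- s = 0, B = replicate (c-2f) 0 + replicate (3f-c) 1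
      have heq : C3 + replicate f (0:ℝ) +
          (replicate (c - 2*f) (0:ℝ) + replicate (3*f - c) (1:ℝ)) = M2 := by
        ext x
        simp only [hC3, hM2, Multiset.count_add, Multiset.count_replicate]
        split_ifs <;> first | omega | (subst_vars; norm_num at *)
      have := hval C3 0 (replicate (c - 2*f) 0 + replicate (3*f - c) 1)
        (by simp [hC3]) hC3mem h01 (by simp; omega)
        (hmem01 _ _)
      rw [heq, mmin_replicate c (by omega) 1, mmax_replicate c (by omega) 1] at this
      exact le_antisymm this.2 this.1
    · -- s = 1, B = replicate (c-f) 0 + replicate (2f-c) 1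
      have heq : C3 + replicate f (1:ℝ) +
          (replicate (c - f) (0:ℝ) + replicate (2*f - c) (1:ℝ)) = M2 := by
        ext x
        simp only [hC3, hM2, Multiset.count_add, Multiset.count_replicate]
        split_ifs <;> first | omega | (subst_vars; norm_num at *)
      have := hval C3 1 (replicate (c - f) 0 + replicate (2*f - c) 1)
        (by simp [hC3]) hC3mem h11 (by simp; omega)
        (hmem01 _ _)
      rw [heq, mmin_replicate c (by omega) 1, mmax_replicate c (by omega) 1] at this
      exact le_antisymm this.2 this.1
  -- Agreement with C2, s = 1, B = replicate f 0, B' = replicate f 1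
  have hminC2 : mmin C2 = 0 := by
    rw [hC2]; unfold mmin; rw [mix_set _ _ hcfne hfne, csInf_pair]; norm_num
  have hmaxC2 : mmax C2 = 1 := by
    rw [hC2]; unfold mmax; rw [mix_set _ _ hcfne hfne, csSup_pair]; norm_num
  have heqA : C2 + replicate f (1:ℝ) + replicate f (0:ℝ) = M1 := by
    ext x
    simp only [hC2, hM1, Multiset.count_add, Multiset.count_replicate]
    split_ifs <;> first | omega | (subst_vars; norm_num at *)
  have heqB : C2 + replicate f (1:ℝ) + replicate f (1:ℝ) = M2 := by
    ext x
    simp only [hC2, hM2, Multiset.count_add, Multiset.count_replicate]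
    split_ifs <;> first | omega | (subst_vars; norm_num at *)
  have hagr' := hagr C2 1 (replicate f 0) (replicate f 1)
    (by simp [hC2]; omega)
    (by rw [hC2]; exact fun x hx => hmem01 _ _ x hx)
    (by rw [hminC2, hmaxC2]; norm_num) h11
    (by simp) (by intro x hx; simp [Multiset.eq_of_mem_replicate hx] <;> norm_num)
    (by simp) (by intro x hx; simp [Multiset.eq_of_mem_replicate hx])
  rw [heqA, heqB, hDM1, hDM2, hminC2, hmaxC2] at hagr'
  norm_num at hagr'
end

section
/- Let t be a natural number, U a nonempty finite multiset of real numbers, and B a finite multiset of real numbers with card B ≤ t, and set N = U + B with card N ≥ 2t + 1. Then every element of trim_t(N) lies in the closed interval [min U, max U]; consequently the arithmetic mean of trim_t(N) lies in [min U, max U]. (This is property P1 of the MSR computation function, instantiated to the reduce-by-trimming MSR function, on which the paper's Validity proof for MSR algorithms under mobile Byzantine faults rests.) -/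
open Multiset

/-- Property P1 of the trimmed-mean MSR function: every element surviving the
trimming step lies in the range of the non-faulty values, and hence so does the
trimmed mean. -/
theorem msr_trim_validity (t : ℕ) (U B : Multiset ℝ)
    (hU : U ≠ 0) (hB : Multiset.card B ≤ t)
    (hN : 2 * t + 1 ≤ Multiset.card (U + B)) :
    (∀ x ∈ trim t (U + B), x ∈ Set.Icc (mmin U) (mmax U)) ∧
    mean (trim t (U + B)) ∈ Set.Icc (mmin U) (mmax U) := by
  set N : Multiset ℝ := U + B with hNdef
  set n : ℕ := Multiset.card N with hn
  set L : List ℝ := N.sort (· ≤ ·) with hL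
  have hlen : L.length = n := Multiset.length_sort _
  have hsorted : L.Pairwise (· ≤ ·) := Multiset.pairwise_sort _ _
  have hcoe : (L : Multiset ℝ) = N := Multiset.sort_eq _ _
  have key : ∀ x ∈ trim t N, x ∈ Set.Icc (mmin U) (mmax U) := by
    intro x hx
    have hx' : x ∈ (L.drop t).take (n - 2 * t) := by
      simpa [trim, hL, hn] using hx
    rw [List.mem_iff_getElem] at hx'
    obtain ⟨i, hi, hxi⟩ := hx'
    have hilen : i < n - 2 * t := by
      have := hi
      simp [List.length_take, List.length_drop, hlen] at this
      omega
    set j : ℕ := t + i with hj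
    have hjn : j < n := by omega
    have hjub : j + t < n := by omega
    have hxval : L[j]'(by omega) = x := by
      rw [← hxi]
      rw [List.getElem_take, List.getElem_drop]
    -- lower bound: at least j+1 ≥ t+1 elements of N are ≤ x
    have hlow : ∃ u ∈ U, u ≤ x := by
      have hsub : (↑(L.take (j + 1)) : Multiset ℝ) ≤ N := by
        rw [← hcoe]
        exact (List.take_sublist _ _).subperm
      have hall : ∀ a ∈ L.take (j + 1), a ≤ x := by
        intro a ha
        rw [List.mem_iff_getElem] at ha
        obtain ⟨k, hk, hka⟩ := ha
        have hk' : k < j + 1 := by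
          simp [List.length_take] at hk; omega
        rw [← hka, List.getElem_take, ← hxval]
        exact hsorted.rel_get_of_le (by simp [Fin.le_def]; omega)
      have hfle : (↑(L.take (j + 1)) : Multiset ℝ) ≤ N.filter (· ≤ x) :=
        Multiset.le_filter.mpr ⟨hsub, by simpa using hall⟩
      have hcard : t + 1 ≤ Multiset.card (N.filter (· ≤ x)) := by
        have := Multiset.card_le_card hfle
        simp [List.length_take, hlen] at this
        omega
      have hsplit : N.filter (· ≤ x) = U.filter (· ≤ x) + B.filter (· ≤ x) := by
        rw [hNdef, Multiset.filter_add]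
      have hBcard : Multiset.card (B.filter (· ≤ x)) ≤ t :=
        le_trans (Multiset.card_le_card (Multiset.filter_le _ _)) hB
      have hUcard : 0 < Multiset.card (U.filter (· ≤ x)) := by
        rw [hsplit, Multiset.card_add] at hcard; omega
      obtain ⟨u, hu⟩ := Multiset.card_pos_iff_exists_mem.mp hUcard
      exact ⟨u, (Multiset.mem_filter.mp hu).1, by
        simpa using (Multiset.mem_filter.mp hu).2⟩
    -- upper bound: at least n - j ≥ t+1 elements of N are ≥ x
    have hhigh : ∃ u ∈ U, x ≤ u := by
      have hsub : (↑(L.drop j) : Multiset ℝ) ≤ N := by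
        rw [← hcoe]
        exact (List.drop_sublist _ _).subperm
      have hall : ∀ a ∈ L.drop j, x ≤ a := by
        intro a ha
        rw [List.mem_iff_getElem] at ha
        obtain ⟨k, hk, hka⟩ := ha
        rw [← hka, List.getElem_drop, ← hxval]
        exact hsorted.rel_get_of_le (by simp only [Fin.le_def]; omega)
      have hfle : (↑(L.drop j) : Multiset ℝ) ≤ N.filter (x ≤ ·) :=
        Multiset.le_filter.mpr ⟨hsub, by simpa using hall⟩
      have hcard : t + 1 ≤ Multiset.card (N.filter (x ≤ ·)) := by
        have := Multiset.card_le_card hfle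
        simp [List.length_drop, hlen] at this
        omega
      have hsplit : N.filter (x ≤ ·) = U.filter (x ≤ ·) + B.filter (x ≤ ·) := by
        rw [hNdef, Multiset.filter_add]
      have hBcard : Multiset.card (B.filter (x ≤ ·)) ≤ t :=
        le_trans (Multiset.card_le_card (Multiset.filter_le _ _)) hB
      have hUcard : 0 < Multiset.card (U.filter (x ≤ ·)) := by
        rw [hsplit, Multiset.card_add] at hcard; omega
      obtain ⟨u, hu⟩ := Multiset.card_pos_iff_exists_mem.mp hUcard
      exact ⟨u, (Multiset.mem_filter.mp hu).1, by
        simpa using (Multiset.mem_filter.mp hu).2⟩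
    obtain ⟨u, hu, hux⟩ := hlow
    obtain ⟨v, hv, hxv⟩ := hhigh
    constructor
    · exact le_trans (csInf_le (Multiset.finite_toSet U).bddBelow hu) hux
    · exact le_trans hxv (le_csSup (Multiset.finite_toSet U).bddAbove hv)
  refine ⟨key, ?_⟩
  -- the trimmed multiset is nonempty
  have hcardtrim : Multiset.card (trim t N) = n - 2 * t := by
    simp [trim, hL, hn, List.length_take, List.length_drop, hlen]
    omega
  have hpos : 0 < Multiset.card (trim t N) := by omega
  have hsumlow : (Multiset.card (trim t N)) • mmin U ≤ (trim t N).sum :=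
    Multiset.card_nsmul_le_sum (fun x hx => (key x hx).1)
  have hsumhigh : (trim t N).sum ≤ (Multiset.card (trim t N)) • mmax U :=
    Multiset.sum_le_card_nsmul _ _ (fun x hx => (key x hx).2)
  have hc : (0 : ℝ) < (Multiset.card (trim t N) : ℝ) := by exact_mod_cast hpos
  rw [nsmul_eq_mul] at hsumlow hsumhigh
  constructor
  · rw [mean, le_div_iff₀ hc]
    linarith [hsumlow]
  · rw [mean, div_le_iff₀ hc]
    linarith [hsumhigh]
end

section
/- Let f ≥ 1 be a natural number, let U be a finite multiset of real numbers with card U ≥ 2f + 1 and max U − min U > 0, and let B₁, B₂ be finite multisets of real numbers each of cardinality at most f. Then |mean(trim_f(U + B₁)) − mean(trim_f(U + B₂))| < max U − min U. (This is property P2 of the MSR computation function, instantiated to the reduce-by-trimming MSR function with only asymmetric faults, i.e. n > 3f, on which the paper's ε-Agreement proof for MSR algorithms under mobile Byzantine faults rests.) -/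
open Multiset

/- ### Auxiliary lemmas about sorted lists -/

lemma sorted_count_of_lt {L : List ℝ} (hL : L.Pairwise (· ≤ ·)) {c : ℝ} {i : ℕ}
    (hi : i < L.length) (h : c < L[i]) :
    L.length - i ≤ (L.filter (fun x => decide (c < x))).length := by
  have hfil : (L.drop i).filter (fun x => decide (c < x)) = L.drop i := by
    rw [List.filter_eq_self]
    intro a ha
    obtain ⟨j, hj, rfl⟩ := List.getElem_of_mem ha
    rw [List.getElem_drop]
    have hij : i + j < L.length := by
      have := hj; rw [List.length_drop] at this; omega
    have h2 := hL.rel_get_of_le (a := ⟨i, hi⟩) (b := ⟨i + j, hij⟩)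
      (Fin.mk_le_mk.mpr (Nat.le_add_right i j))
    simp only [List.get_eq_getElem] at h2
    simpa using lt_of_lt_of_le h h2
  have hsub := (List.drop_sublist i L).filter (fun x => decide (c < x))
  rw [hfil] at hsub
  have := hsub.length_le
  rwa [List.length_drop] at this

lemma sorted_count_of_gt {L : List ℝ} (hL : L.Pairwise (· ≤ ·)) {c : ℝ} {i : ℕ}
    (hi : i < L.length) (h : L[i] < c) :
    i + 1 ≤ (L.filter (fun x => decide (x < c))).length := by
  have hfil : (L.take (i + 1)).filter (fun x => decide (x < c)) = L.take (i + 1) := by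
    rw [List.filter_eq_self]
    intro a ha
    obtain ⟨j, hj, rfl⟩ := List.getElem_of_mem ha
    rw [List.getElem_take]
    have hj' : j ≤ i := by
      have := hj; rw [List.length_take] at this; omega
    have hjL : j < L.length := by omega
    have h2 := hL.rel_get_of_le (a := ⟨j, hjL⟩) (b := ⟨i, hi⟩)
      (Fin.mk_le_mk.mpr hj')
    simp only [List.get_eq_getElem] at h2
    simpa using lt_of_le_of_lt h2 h
  have hsub := (List.take_sublist (i + 1) L).filter (fun x => decide (x < c))
  rw [hfil] at hsub
  have := hsub.length_le
  rw [List.length_take] at this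
  omega

lemma sorted_count_lt_of_le {L : List ℝ} (hL : L.Pairwise (· ≤ ·)) {c : ℝ} {i : ℕ}
    (hi : i < L.length) (h : c ≤ L[i]) :
    (L.filter (fun x => decide (x < c))).length ≤ i := by
  by_contra hcon
  push_neg at hcon
  have : i + 1 ≤ (L.filter (fun x => decide (x < c))).length := hcon
  -- derive L[i] < c would be needed; instead argue via drop
  have hfil : (L.drop i).filter (fun x => decide (x < c)) = [] := by
    rw [List.filter_eq_nil_iff]
    intro a ha
    obtain ⟨j, hj, rfl⟩ := List.getElem_of_mem ha
    rw [List.getElem_drop]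
    have hij : i + j < L.length := by
      have := hj; rw [List.length_drop] at this; omega
    have h2 := hL.rel_get_of_le (a := ⟨i, hi⟩) (b := ⟨i + j, hij⟩)
      (Fin.mk_le_mk.mpr (Nat.le_add_right i j))
    simp only [List.get_eq_getElem] at h2
    simp only [decide_eq_true_eq]
    exact fun hx => absurd (lt_of_le_of_lt (le_trans h h2) hx) (lt_irrefl _)
  have hsplit : L = L.take i ++ L.drop i := (List.take_append_drop i L).symm
  have : (L.filter (fun x => decide (x < c))).length
      = ((L.take i).filter (fun x => decide (x < c))).length := by
    conv_lhs => rw [hsplit]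
    rw [List.filter_append, hfil, List.append_nil]
  rw [this] at hcon
  have h3 := (List.filter_sublist (l := L.take i) (p := fun x => decide (x < c))).length_le
  rw [List.length_take] at h3
  omega

lemma sorted_count_gt_of_le {L : List ℝ} (hL : L.Pairwise (· ≤ ·)) {c : ℝ} {i : ℕ}
    (hi : i < L.length) (h : L[i] ≤ c) :
    (L.filter (fun x => decide (c < x))).length ≤ L.length - (i + 1) := by
  have hfil : (L.take (i + 1)).filter (fun x => decide (c < x)) = [] := by
    rw [List.filter_eq_nil_iff]
    intro a ha
    obtain ⟨j, hj, rfl⟩ := List.getElem_of_mem ha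
    rw [List.getElem_take]
    have hj' : j ≤ i := by
      have := hj; rw [List.length_take] at this; omega
    have hjL : j < L.length := by omega
    have h2 := hL.rel_get_of_le (a := ⟨j, hjL⟩) (b := ⟨i, hi⟩)
      (Fin.mk_le_mk.mpr hj')
    simp only [List.get_eq_getElem] at h2
    simp only [decide_eq_true_eq]
    exact fun hx => absurd (lt_of_lt_of_le (lt_of_lt_of_le hx h2) h) (lt_irrefl _)
  have hsplit : L = L.take (i + 1) ++ L.drop (i + 1) := (List.take_append_drop (i + 1) L).symm
  have heq : (L.filter (fun x => decide (c < x))).length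
      = ((L.drop (i + 1)).filter (fun x => decide (c < x))).length := by
    conv_lhs => rw [hsplit]
    rw [List.filter_append, hfil, List.nil_append]
  rw [heq]
  have h3 := (List.filter_sublist (l := L.drop (i + 1)) (p := fun x => decide (c < x))).length_le
  rw [List.length_drop] at h3
  exact h3

/- ### Lemmas about `trim` -/

lemma card_filter_coe_sort (p : ℝ → Prop) [DecidablePred p] (N : Multiset ℝ) :
    ((N.sort (· ≤ ·)).filter (fun x => decide (p x))).length = Multiset.card (N.filter p) := by
  have := Multiset.filter_coe p (N.sort (· ≤ ·))
  rw [Multiset.sort_eq] at this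
  rw [this, Multiset.coe_card]

lemma trim_mem_structure {f : ℕ} {N : Multiset ℝ} {x : ℝ} (hx : x ∈ trim f N) :
    ∃ j, ∃ h : f + j < (N.sort (· ≤ ·)).length, j < Multiset.card N - 2 * f ∧
      x = (N.sort (· ≤ ·))[f + j] := by
  rw [trim, Multiset.mem_coe] at hx
  obtain ⟨j, hj, rfl⟩ := List.getElem_of_mem hx
  have hj' := hj
  rw [List.length_take, List.length_drop] at hj'
  have hfl : f + j < (N.sort (· ≤ ·)).length := by
    rw [Multiset.length_sort] at hj' ⊢
    omega
  refine ⟨j, hfl, ?_, ?_⟩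
  · rw [Multiset.length_sort] at hj' hfl; omega
  · rw [List.getElem_take, List.getElem_drop]

lemma trim_card {f : ℕ} {N : Multiset ℝ} (hn : 2 * f + 1 ≤ Multiset.card N) :
    Multiset.card (trim f N) = Multiset.card N - 2 * f := by
  rw [trim]
  simp only [Multiset.coe_card, List.length_take, List.length_drop, Multiset.length_sort]
  omega

lemma trim_le {f : ℕ} {N : Multiset ℝ} {M : ℝ}
    (hhigh : Multiset.card (N.filter (fun x => M < x)) ≤ f) :
    ∀ x ∈ trim f N, x ≤ M := by
  intro x hx
  obtain ⟨j, hfl, hj, rfl⟩ := trim_mem_structure hx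
  by_contra hcon
  push_neg at hcon
  have := sorted_count_of_lt (N.pairwise_sort (· ≤ ·)) hfl hcon
  rw [card_filter_coe_sort (fun x => M < x)] at this
  rw [Multiset.length_sort] at this hfl
  omega

lemma trim_ge {f : ℕ} {N : Multiset ℝ} {m : ℝ}
    (hlow : Multiset.card (N.filter (fun x => x < m)) ≤ f) :
    ∀ x ∈ trim f N, m ≤ x := by
  intro x hx
  obtain ⟨j, hfl, hj, rfl⟩ := trim_mem_structure hx
  by_contra hcon
  push_neg at hcon
  have := sorted_count_of_gt (N.pairwise_sort (· ≤ ·)) hfl hcon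
  rw [card_filter_coe_sort (fun x => x < m)] at this
  omega

lemma trim_mem_of_index {f : ℕ} {N : Multiset ℝ} (j : ℕ)
    (hj : j < Multiset.card N - 2 * f) :
    ∃ h : f + j < (N.sort (· ≤ ·)).length, (N.sort (· ≤ ·))[f + j] ∈ trim f N := by
  have hlen : f + j < (N.sort (· ≤ ·)).length := by
    rw [Multiset.length_sort]; omega
  refine ⟨hlen, ?_⟩
  rw [trim, Multiset.mem_coe]
  have hlen2 : j < (((N.sort (· ≤ ·)).drop f).take (Multiset.card N - 2 * f)).length := by
    rw [List.length_take, List.length_drop, Multiset.length_sort]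
    omega
  have : (((N.sort (· ≤ ·)).drop f).take (Multiset.card N - 2 * f))[j] = (N.sort (· ≤ ·))[f + j] := by
    rw [List.getElem_take, List.getElem_drop]
  rw [← this]
  exact List.getElem_mem hlen2

lemma trim_exists_lt {f : ℕ} {N : Multiset ℝ} {M : ℝ}
    (hn : 2 * f + 1 ≤ Multiset.card N)
    (hcount : f + 1 ≤ Multiset.card (N.filter (fun x => x < M))) :
    ∃ x ∈ trim f N, x < M := by
  obtain ⟨hlen, hmem⟩ := trim_mem_of_index (f := f) (N := N) 0 (by omega)
  refine ⟨(N.sort (· ≤ ·))[f + 0], hmem, ?_⟩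
  by_contra hcon
  push_neg at hcon
  have := sorted_count_lt_of_le (N.pairwise_sort (· ≤ ·)) hlen hcon
  rw [card_filter_coe_sort (fun x => x < M)] at this
  omega

lemma trim_exists_gt {f : ℕ} {N : Multiset ℝ} {m : ℝ}
    (hn : 2 * f + 1 ≤ Multiset.card N)
    (hcount : f + 1 ≤ Multiset.card (N.filter (fun x => m < x))) :
    ∃ x ∈ trim f N, m < x := by
  obtain ⟨hlen, hmem⟩ := trim_mem_of_index (f := f) (N := N)
    (Multiset.card N - 2 * f - 1) (by omega)
  refine ⟨_, hmem, ?_⟩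
  by_contra hcon
  push_neg at hcon
  have := sorted_count_gt_of_le (N.pairwise_sort (· ≤ ·)) hlen hcon
  rw [card_filter_coe_sort (fun x => m < x)] at this
  rw [Multiset.length_sort] at this hlen
  omega

/- ### Lemmas about `mean` -/

lemma le_mean {S : Multiset ℝ} {m : ℝ} (h0 : 0 < Multiset.card S)
    (hlb : ∀ x ∈ S, m ≤ x) : m ≤ mean S := by
  have h := Multiset.card_nsmul_le_sum hlb
  rw [nsmul_eq_mul] at h
  rw [mean, le_div_iff₀ (by exact_mod_cast h0)]
  linarith

lemma mean_le {S : Multiset ℝ} {M : ℝ} (h0 : 0 < Multiset.card S)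
    (hub : ∀ x ∈ S, x ≤ M) : mean S ≤ M := by
  have h := Multiset.sum_le_card_nsmul S M hub
  rw [nsmul_eq_mul] at h
  rw [mean, div_le_iff₀ (by exact_mod_cast h0)]
  linarith

lemma mean_lt {S : Multiset ℝ} {M : ℝ} (hub : ∀ x ∈ S, x ≤ M)
    (hw : ∃ x ∈ S, x < M) : mean S < M := by
  obtain ⟨x, hx, hxM⟩ := hw
  obtain ⟨S', rfl⟩ := Multiset.exists_cons_of_mem hx
  have hS' : S'.sum ≤ (Multiset.card S' : ℝ) * M := by
    have := Multiset.sum_le_card_nsmul S' M (fun y hy => hub y (Multiset.mem_cons_of_mem hy))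
    rwa [nsmul_eq_mul] at this
  rw [mean, Multiset.sum_cons, Multiset.card_cons, div_lt_iff₀ (by positivity)]
  push_cast
  linarith

lemma lt_mean {S : Multiset ℝ} {m : ℝ} (hlb : ∀ x ∈ S, m ≤ x)
    (hw : ∃ x ∈ S, m < x) : m < mean S := by
  obtain ⟨x, hx, hxm⟩ := hw
  obtain ⟨S', rfl⟩ := Multiset.exists_cons_of_mem hx
  have hS' : (Multiset.card S' : ℝ) * m ≤ S'.sum := by
    have := Multiset.card_nsmul_le_sum (fun y hy => hlb y (Multiset.mem_cons_of_mem hy))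
    rwa [nsmul_eq_mul] at this
  rw [mean, Multiset.sum_cons, Multiset.card_cons, lt_div_iff₀ (by positivity)]
  push_cast
  linarith

/- ### Main theorem -/

/-- Property P2 of the trimmed-mean MSR function with only asymmetric faults:
the trimmed means computed from two views differing only in the at most `f`
Byzantine values are strictly closer than the diameter of the non-faulty
values. -/
theorem msr_trim_agreement (f : ℕ) (hf : 1 ≤ f) (U B₁ B₂ : Multiset ℝ)
    (hU : 2 * f + 1 ≤ Multiset.card U) (hδ : mmax U - mmin U > 0)
    (hB₁ : Multiset.card B₁ ≤ f) (hB₂ : Multiset.card B₂ ≤ f) :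
    |mean (trim f (U + B₁)) - mean (trim f (U + B₂))| < mmax U - mmin U := by
  set m := mmin U with hm
  set M := mmax U with hM
  have hmM : m < M := by linarith
  -- bounds on the elements of U
  have hfin : {x : ℝ | x ∈ U}.Finite := U.finite_toSet
  have hUbd : ∀ x ∈ U, m ≤ x ∧ x ≤ M := by
    intro x hx
    exact ⟨csInf_le hfin.bddBelow hx, le_csSup hfin.bddAbove hx⟩
  -- filter bounds for U + B with card B ≤ f
  have hhigh : ∀ (B : Multiset ℝ), Multiset.card B ≤ f →
      Multiset.card ((U + B).filter (fun x => M < x)) ≤ f := by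
    intro B hB
    rw [Multiset.filter_add, Multiset.card_add]
    have h1 : U.filter (fun x => M < x) = 0 := by
      rw [Multiset.filter_eq_nil]
      intro a ha
      exact not_lt.mpr (hUbd a ha).2
    have h2 : Multiset.card (B.filter (fun x => M < x)) ≤ Multiset.card B :=
      Multiset.card_le_card (Multiset.filter_le _ B)
    rw [h1]
    simp only [Multiset.card_zero]
    omega
  have hlow : ∀ (B : Multiset ℝ), Multiset.card B ≤ f →
      Multiset.card ((U + B).filter (fun x => x < m)) ≤ f := by
    intro B hB
    rw [Multiset.filter_add, Multiset.card_add]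
    have h1 : U.filter (fun x => x < m) = 0 := by
      rw [Multiset.filter_eq_nil]
      intro a ha
      exact not_lt.mpr (hUbd a ha).1
    have h2 : Multiset.card (B.filter (fun x => x < m)) ≤ Multiset.card B :=
      Multiset.card_le_card (Multiset.filter_le _ B)
    rw [h1]
    simp only [Multiset.card_zero]
    omega
  -- cardinalities
  have hcard : ∀ (B : Multiset ℝ), 2 * f + 1 ≤ Multiset.card (U + B) := by
    intro B
    rw [Multiset.card_add]
    omega
  have hcardtrim : ∀ (B : Multiset ℝ), 0 < Multiset.card (trim f (U + B)) := by
    intro B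
    rw [trim_card (hcard B), Multiset.card_add]
    omega
  -- the counting dichotomy
  have hdichot : f + 1 ≤ Multiset.card (U.filter (fun x => x < M)) ∨
      f + 1 ≤ Multiset.card (U.filter (fun x => m < x)) := by
    have hsplit := Multiset.filter_add_not (fun x => x < M) U
    have hcards : Multiset.card (U.filter (fun x => x < M)) +
        Multiset.card (U.filter (fun x => ¬ x < M)) = Multiset.card U := by
      rw [← Multiset.card_add, hsplit]
    have hmono : Multiset.card (U.filter (fun x => ¬ x < M)) ≤
        Multiset.card (U.filter (fun x => m < x)) := by
      apply Multiset.card_le_card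
      apply Multiset.monotone_filter_right
      intro b hb
      exact lt_of_lt_of_le hmM (not_lt.mp hb)
    omega
  -- lifting witness counts to U + B
  have hlift : ∀ (p : ℝ → Prop) [DecidablePred p] (B : Multiset ℝ),
      Multiset.card (U.filter p) ≤ Multiset.card ((U + B).filter p) := by
    intro p _ B
    rw [Multiset.filter_add, Multiset.card_add]
    omega
  set a := mean (trim f (U + B₁)) with ha
  set b := mean (trim f (U + B₂)) with hb
  rw [abs_sub_lt_iff]
  rcases hdichot with hc | hc
  · -- both means are < M and ≥ m
    have haM : a < M := mean_lt (trim_le (hhigh B₁ hB₁))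
      (trim_exists_lt (hcard B₁) (le_trans hc (hlift _ B₁)))
    have hbM : b < M := mean_lt (trim_le (hhigh B₂ hB₂))
      (trim_exists_lt (hcard B₂) (le_trans hc (hlift _ B₂)))
    have ham : m ≤ a := le_mean (hcardtrim B₁) (trim_ge (hlow B₁ hB₁))
    have hbm : m ≤ b := le_mean (hcardtrim B₂) (trim_ge (hlow B₂ hB₂))
    constructor <;> linarith
  · -- both means are > m and ≤ M
    have ham : m < a := lt_mean (trim_ge (hlow B₁ hB₁))
      (trim_exists_gt (hcard B₁) (le_trans hc (hlift _ B₁)))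
    have hbm : m < b := lt_mean (trim_ge (hlow B₂ hB₂))
      (trim_exists_gt (hcard B₂) (le_trans hc (hlift _ B₂)))
    have haM : a ≤ M := mean_le (hcardtrim B₁) (trim_le (hhigh B₁ hB₁))
    have hbM : b ≤ M := mean_le (hcardtrim B₂) (trim_le (hhigh B₂ hB₂))
    constructor <;> linarith
end

section
/- Let t be a natural number, U a nonempty finite multiset of real numbers, and B a finite multiset of real numbers with card B ≤ t, and set N = U + B with card N ≥ t + 1. Then every element of the multiset obtained from N by deleting its t largest elements (with multiplicity) is at most max U; symmetrically, every element of the multiset obtained from N by deleting its t smallest elements (with multiplicity) is at least min U. -/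
open Multiset

/-! Every entry of `U + B` above `max U` comes from `B`, so there are at most `t` of them. But in an
ascending list, an entry outside the last `t` positions has at least `t + 1` entries (itself and the
last `t`) at least as large. Dually for `min U`. -/

namespace List

variable {α : Type*} [Preorder α] [DecidableLE α] {l : List α} {t : ℕ} {x : α}

theorem Pairwise.lt_countP_le_of_mem_take (hl : l.Pairwise (· ≤ ·))
    (hx : x ∈ l.take (l.length - t)) : t < l.countP (x ≤ ·) := by
  have ht : t < l.length := by
    have := length_pos_of_mem hx
    rw [length_take] at this
    omega
  rw [← take_append_drop (l.length - t) l, pairwise_append] at hl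
  have hlarge : (l.drop (l.length - t)).countP (x ≤ ·) = t := by
    rw [countP_eq_length.mpr fun y hy => decide_eq_true (hl.2.2 x hx y hy), length_drop]
    omega
  have hself : 0 < (l.take (l.length - t)).countP (x ≤ ·) :=
    countP_pos_iff.mpr ⟨x, hx, decide_eq_true le_rfl⟩
  rw [← take_append_drop (l.length - t) l, countP_append, hlarge]
  omega

theorem Pairwise.lt_countP_le_of_mem_drop (hl : l.Pairwise (· ≤ ·)) (hx : x ∈ l.drop t) :
    t < l.countP (· ≤ x) := by
  have ht : t < l.length := by
    have := length_pos_of_mem hx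
    rw [length_drop] at this
    omega
  rw [← take_append_drop t l, pairwise_append] at hl
  have hsmall : (l.take t).countP (· ≤ x) = t := by
    rw [countP_eq_length.mpr fun y hy => decide_eq_true (hl.2.2 y hy x hx), length_take]
    omega
  have hself : 0 < (l.drop t).countP (· ≤ x) :=
    countP_pos_iff.mpr ⟨x, hx, decide_eq_true le_rfl⟩
  rw [← take_append_drop t l, countP_append, hsmall]
  omega

end List

theorem Multiset.countP_add_le_card_right {α : Type*} {p : α → Prop} [DecidablePred p]
    {U B : Multiset α} (hU : ∀ u ∈ U, ¬p u) : (U + B).countP p ≤ card B := by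
  rw [countP_add, countP_eq_zero.mpr hU, zero_add]
  exact countP_le_card _ _

theorem le_mmax {V : Multiset ℝ} {x : ℝ} (hx : x ∈ V) : x ≤ mmax V :=
  le_csSup (Multiset.finite_toSet V).bddAbove hx

theorem mmin_le {V : Multiset ℝ} {x : ℝ} (hx : x ∈ V) : mmin V ≤ x :=
  csInf_le (Multiset.finite_toSet V).bddBelow hx

/-- The sorted list of `N` is ascending, so dropping the `t` largest entries is taking the first
`card N - t`, and dropping the `t` smallest is dropping the first `t`. -/
theorem trim_sides_bound_general (t : ℕ) (U B : Multiset ℝ)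
    (hB : Multiset.card B ≤ t) :
    (∀ x ∈ ((((U + B).sort (· ≤ ·)).take (Multiset.card (U + B) - t) : List ℝ) :
        Multiset ℝ), x ≤ mmax U) ∧
    (∀ x ∈ ((((U + B).sort (· ≤ ·)).drop t : List ℝ) : Multiset ℝ),
        mmin U ≤ x) := by
  have hsorted := (U + B).pairwise_sort (· ≤ ·)
  constructor
  · intro x hx
    by_contra! hx_large
    have hmany := hsorted.lt_countP_le_of_mem_take (t := t) (x := x)
      (by rwa [length_sort, ← mem_coe])
    have hfew : (U + B).countP (x ≤ ·) ≤ card B :=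
      countP_add_le_card_right fun u hu => not_le.mpr ((le_mmax hu).trans_lt hx_large)
    rw [← coe_countP, sort_eq] at hmany
    exact (hfew.trans hB).not_gt hmany
  · intro x hx
    by_contra! hx_small
    have hmany := hsorted.lt_countP_le_of_mem_drop (t := t) (x := x) (mem_coe.mp hx)
    have hfew : (U + B).countP (· ≤ x) ≤ card B :=
      countP_add_le_card_right fun u hu => not_le.mpr (hx_small.trans_le (mmin_le hu))
    rw [← coe_countP, sort_eq] at hmany
    exact (hfew.trans hB).not_gt hmany

/-- Deleting the `t` largest elements of `U + B` (with `card B ≤ t`) leaves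
only elements at most `max U`; symmetrically, deleting the `t` smallest leaves
only elements at least `min U`. Here the sorted list of `N` is ascending, so
dropping the `t` largest is taking the first `card N - t` entries, and
dropping the `t` smallest is dropping the first `t` entries. -/
theorem trim_sides_bound (t : ℕ) (U B : Multiset ℝ)
    (hU : U ≠ 0) (hB : Multiset.card B ≤ t)
    (hN : t + 1 ≤ Multiset.card (U + B)) :
    (∀ x ∈ ((((U + B).sort (· ≤ ·)).take (Multiset.card (U + B) - t) : List ℝ) :
        Multiset ℝ), x ≤ mmax U) ∧
    (∀ x ∈ ((((U + B).sort (· ≤ ·)).drop t : List ℝ) : Multiset ℝ),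
        mmin U ≤ x) :=
  trim_sides_bound_general t U B hB
end

section
/- Let t be a natural number, U a nonempty finite multiset of real numbers, and B a finite multiset of real numbers with card B ≤ t, and set N = U + B with card N ≥ 2t + 1. Then the multiset trim_t(N) contains at least (card U) − 2t elements of U, counted with multiplicity; that is, card(trim_t(N) ∩ U) ≥ card U − 2t, where ∩ denotes multiset intersection. -/
open Multiset

/-- After trimming, a correct process retains at least `card U - 2t` non-faulty
values (counted with multiplicity). -/
theorem trim_retains_correct_values (t : ℕ) (U B : Multiset ℝ)
    (hU : U ≠ 0) (hB : Multiset.card B ≤ t)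
    (hN : 2 * t + 1 ≤ Multiset.card (U + B)) :
    Multiset.card U - 2 * t ≤ Multiset.card (trim t (U + B) ∩ U) := by
  set N := U + B with hNdef
  set S := trim t N with hS
  have hSleN : S ≤ N := by
    have hsub : List.Sublist (((N.sort (· ≤ ·)).drop t).take (Multiset.card N - 2 * t))
        (N.sort (· ≤ ·)) :=
      ((List.take_sublist _ _).trans (List.drop_sublist _ _))
    have : (S : Multiset ℝ) ≤ (↑(N.sort (· ≤ ·)) : Multiset ℝ) := by
      rw [hS, trim]
      exact Multiset.coe_le.mpr hsub.subperm
    simpa [Multiset.sort_eq] using this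
  have hcardS : Multiset.card S = Multiset.card N - 2 * t := by
    rw [hS, trim]
    simp only [Multiset.coe_card, List.length_take, List.length_drop,
      Multiset.length_sort]
    omega
  have h1 : S - B ≤ U := Multiset.sub_le_iff_le_add.mpr hSleN
  have h2 : S - B ≤ S ∩ U := le_inter (tsub_le_self) h1
  have h3 : Multiset.card S ≤ Multiset.card (S - B) + Multiset.card B := by
    have := Multiset.card_le_card (le_tsub_add : S ≤ S - B + B)
    simpa using this
  have h4 := Multiset.card_le_card h2
  have hNc : Multiset.card N = Multiset.card U + Multiset.card B := by
    simp [hNdef]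
  omega
end

section
/- Let f be a natural number, let U be a nonempty finite multiset of real numbers with card U ≥ 2f + 1, and let B₁, B₂ be finite multisets of real numbers each of cardinality at most f. Then |mean(trim_f(U + B₁)) − mean(trim_f(U + B₂))| ≤ max U − min U. In particular, for every ε > 0, if max U − min U ≤ ε then the trimmed means computed by any two correct processes from U + B₁ and U + B₂ are within ε of each other. (This is the quantitative content of the paper's claim that once ε-Agreement is achieved among the currently non-faulty processes, it is preserved among the possibly different non-faulty processes of later rounds.) -/
open Multiset

namespace List.SortedLE

variable {α : Type*} [Preorder α] [DecidableLE α] {L : List α}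

theorem succ_le_countP_le_getElem (hL : L.SortedLE) (k : ℕ) (hk : k < L.length) :
    k + 1 ≤ L.countP (· ≤ L[k]) := by
  have hle : ∀ y ∈ L.take (k + 1), y ≤ L[k] := by
    intro y hy
    obtain ⟨j, hj, rfl⟩ := List.getElem_of_mem hy
    rw [List.getElem_take]
    exact hL.getElem_le_getElem_of_le (by rw [List.length_take] at hj; omega)
  calc k + 1 = (L.take (k + 1)).length := by rw [List.length_take]; omega
    _ = (L.take (k + 1)).countP (· ≤ L[k]) := (List.countP_eq_length.2 (by simpa using hle)).symm
    _ ≤ L.countP (· ≤ L[k]) := (List.take_sublist _ _).countP_le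

theorem length_sub_le_countP_getElem_le (hL : L.SortedLE) (k : ℕ) (hk : k < L.length) :
    L.length - k ≤ L.countP (L[k] ≤ ·) := by
  have hge : ∀ y ∈ L.drop k, L[k] ≤ y := by
    intro y hy
    obtain ⟨j, hj, rfl⟩ := List.getElem_of_mem hy
    rw [List.getElem_drop]
    exact hL.getElem_le_getElem_of_le (by omega)
  calc L.length - k = (L.drop k).length := List.length_drop.symm
    _ = (L.drop k).countP (L[k] ≤ ·) := (List.countP_eq_length.2 (by simpa using hge)).symm
    _ ≤ L.countP (L[k] ≤ ·) := (List.drop_sublist _ _).countP_le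

end List.SortedLE

theorem card_trim (t : ℕ) (N : Multiset ℝ) : card (trim t N) = card N - 2 * t := by
  simp only [trim, coe_card, List.length_take, List.length_drop, length_sort]
  omega

theorem trim_ne_zero {t : ℕ} {N : Multiset ℝ} (hN : 2 * t < card N) : trim t N ≠ 0 := by
  rw [← card_pos, card_trim]
  omega

theorem succ_le_countP_of_mem_trim {t : ℕ} {N : Multiset ℝ} {x : ℝ} (hx : x ∈ trim t N) :
    t + 1 ≤ N.countP (· ≤ x) ∧ t + 1 ≤ N.countP (x ≤ ·) := by
  set L := N.sort (· ≤ ·)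
  have hL : L.SortedLE := (pairwise_sort N _).sortedLE
  have hlen : L.length = card N := length_sort _
  have hcount : ∀ (p : ℝ → Prop) [DecidablePred p], N.countP p = L.countP (p ·) := by
    intro p _
    rw [← coe_countP, sort_eq]
  obtain ⟨i, hi, rfl⟩ := List.getElem_of_mem (show x ∈ (L.drop t).take (card N - 2 * t) from hx)
  simp only [List.length_take, List.length_drop] at hi
  simp only [List.getElem_take, List.getElem_drop, hcount]
  constructor
  · exact le_trans (by omega) (hL.succ_le_countP_le_getElem (t + i) (by omega))
  · exact le_trans (by omega) (hL.length_sub_le_countP_getElem_le (t + i) (by omega))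

theorem exists_mem_le_and_exists_mem_ge_of_mem_trim_add {t : ℕ} {U B : Multiset ℝ}
    (hB : card B ≤ t) {x : ℝ} (hx : x ∈ trim t (U + B)) :
    (∃ u ∈ U, u ≤ x) ∧ ∃ u ∈ U, x ≤ u := by
  have hU_pos : ∀ (p : ℝ → Prop) [DecidablePred p], t + 1 ≤ (U + B).countP p → 0 < U.countP p := by
    intro p _ h
    rw [countP_add] at h
    have := countP_le_card p B
    omega
  obtain ⟨hbelow, habove⟩ := succ_le_countP_of_mem_trim hx
  exact ⟨countP_pos.1 (hU_pos _ hbelow), countP_pos.1 (hU_pos _ habove)⟩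

theorem mem_Icc_of_mem_trim_add {t : ℕ} {U B : Multiset ℝ} (hB : card B ≤ t) {x : ℝ}
    (hx : x ∈ trim t (U + B)) : x ∈ Set.Icc (mmin U) (mmax U) := by
  obtain ⟨⟨u, hu, hux⟩, ⟨v, hv, hxv⟩⟩ := exists_mem_le_and_exists_mem_ge_of_mem_trim_add hB hx
  exact ⟨(mmin_le hu).trans hux, hxv.trans (le_mmax hv)⟩

theorem mean_mem_Icc {R : Multiset ℝ} (hR : R ≠ 0) {a b : ℝ}
    (h : ∀ x ∈ R, x ∈ Set.Icc a b) : mean R ∈ Set.Icc a b := by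
  have hcard : (0 : ℝ) < card R := by exact_mod_cast card_pos.2 hR
  have hlo : card R • a ≤ R.sum := card_nsmul_le_sum fun x hx => (h x hx).1
  have hhi : R.sum ≤ card R • b := sum_le_card_nsmul R b fun x hx => (h x hx).2
  rw [nsmul_eq_mul] at hlo hhi
  constructor
  · rw [mean, le_div_iff₀ hcard]; linarith
  · rw [mean, div_le_iff₀ hcard]; linarith

theorem mean_trim_add_mem_Icc {t : ℕ} {U B : Multiset ℝ} (hU : 2 * t + 1 ≤ card U)
    (hB : card B ≤ t) : mean (trim t (U + B)) ∈ Set.Icc (mmin U) (mmax U) :=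
  mean_mem_Icc (trim_ne_zero (by rw [card_add]; omega)) fun _ => mem_Icc_of_mem_trim_add hB

theorem trim_mean_preserves_agreement_general (f : ℕ) (U B₁ B₂ : Multiset ℝ)
    (hUc : 2 * f + 1 ≤ Multiset.card U)
    (hB₁ : Multiset.card B₁ ≤ f) (hB₂ : Multiset.card B₂ ≤ f) :
    |mean (trim f (U + B₁)) - mean (trim f (U + B₂))| ≤ mmax U - mmin U ∧
    (∀ ε > (0 : ℝ), mmax U - mmin U ≤ ε →
      |mean (trim f (U + B₁)) - mean (trim f (U + B₂))| ≤ ε) := by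
  obtain ⟨h₁_lo, h₁_hi⟩ := mean_trim_add_mem_Icc hUc hB₁
  obtain ⟨h₂_lo, h₂_hi⟩ := mean_trim_add_mem_Icc hUc hB₂
  have hdist := abs_sub_le_of_le_of_le h₁_lo h₁_hi h₂_lo h₂_hi
  exact ⟨hdist, fun ε _ hε => hdist.trans hε⟩

/-- Once the non-faulty values are within `ε` of each other, the trimmed means
computed by any two correct processes remain within `ε` of each other. -/
theorem trim_mean_preserves_agreement (f : ℕ) (U B₁ B₂ : Multiset ℝ)
    (hU : U ≠ 0) (hUc : 2 * f + 1 ≤ Multiset.card U)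
    (hB₁ : Multiset.card B₁ ≤ f) (hB₂ : Multiset.card B₂ ≤ f) :
    |mean (trim f (U + B₁)) - mean (trim f (U + B₂))| ≤ mmax U - mmin U ∧
    (∀ ε > (0 : ℝ), mmax U - mmin U ≤ ε →
      |mean (trim f (U + B₁)) - mean (trim f (U + B₂))| ≤ ε) :=
  trim_mean_preserves_agreement_general f U B₁ B₂ hUc hB₁ hB₂
end
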